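/- (Coercivity, growth part.) For every K ∈ 𝕂, the cost satisfies the lower bound C(K) ≥ μ · Λ_min(R) · ‖K‖₂². Consequently, for any sequence {K^l} ⊂ 𝕂 with ‖K^l‖₂ → +∞ one has C(K^l) → +∞. -/

import Mathlib

open Matrix Filter
open scoped Kronecker Topology

namespace MJLS

noncomputable section

attribute [local instance] Classical.propDecidable

/-- Closed-loop matrices `Γ i = A i - B i * K i`. -/
def Gam {d k N : ℕ} (A : Fin N → Matrix (Fin d) (Fin d) ℝ)
    (B : Fin N → Matrix (Fin d) (Fin k) ℝ)
    (K : Fin N → Matrix (Fin k) (Fin d) ℝ) : Fin N → Matrix (Fin d) (Fin d) ℝ :=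
  fun i => A i - B i * K i

/-- The operator `E_i(V) = ∑ j, p i j • V j`. -/
def opE {d N : ℕ} (Pr : Matrix (Fin N) (Fin N) ℝ)
    (V : Fin N → Matrix (Fin d) (Fin d) ℝ) : Fin N → Matrix (Fin d) (Fin d) ℝ :=
  fun i => ∑ j, Pr i j • V j

/-- The matrix `𝒜 = diag(Γᵀ ⊗ Γᵀ) (P ⊗ I)`. -/
def calA {d N : ℕ} (Pr : Matrix (Fin N) (Fin N) ℝ)
    (Γ : Fin N → Matrix (Fin d) (Fin d) ℝ) :
    Matrix (Fin N × Fin d × Fin d) (Fin N × Fin d × Fin d) ℝ :=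
  (Matrix.reindex (Equiv.prodComm (Fin d × Fin d) (Fin N))
      (Equiv.prodComm (Fin d × Fin d) (Fin N))
      (Matrix.blockDiagonal fun i => (Γ i)ᵀ ⊗ₖ (Γ i)ᵀ)) *
    (Pr ⊗ₖ (1 : Matrix (Fin d × Fin d) (Fin d × Fin d) ℝ))

/-- `K` is mean-square stabilizing: the spectral radius of `𝒜` is less than `1`. -/
def MSS {d k N : ℕ} (Pr : Matrix (Fin N) (Fin N) ℝ)
    (A : Fin N → Matrix (Fin d) (Fin d) ℝ) (B : Fin N → Matrix (Fin d) (Fin k) ℝ)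
    (K : Fin N → Matrix (Fin k) (Fin d) ℝ) : Prop :=
  spectralRadius ℂ ((calA Pr (Gam A B K)).map (algebraMap ℝ ℂ)) < 1

/-- `P` solves the coupled Lyapunov equations for the policy `K`. -/
def IsLyap {d k N : ℕ} (Pr : Matrix (Fin N) (Fin N) ℝ)
    (A : Fin N → Matrix (Fin d) (Fin d) ℝ) (B : Fin N → Matrix (Fin d) (Fin k) ℝ)
    (Q : Fin N → Matrix (Fin d) (Fin d) ℝ) (R : Fin N → Matrix (Fin k) (Fin k) ℝ)
    (K : Fin N → Matrix (Fin k) (Fin d) ℝ)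
    (P : Fin N → Matrix (Fin d) (Fin d) ℝ) : Prop :=
  ∀ i, P i = Q i + (K i)ᵀ * R i * K i + (Gam A B K i)ᵀ * opE Pr P i * Gam A B K i

/-- `P^K`, the (for mean-square stabilizing `K`, unique) solution of the coupled
Lyapunov equations. -/
def PK {d k N : ℕ} (Pr : Matrix (Fin N) (Fin N) ℝ)
    (A : Fin N → Matrix (Fin d) (Fin d) ℝ) (B : Fin N → Matrix (Fin d) (Fin k) ℝ)
    (Q : Fin N → Matrix (Fin d) (Fin d) ℝ) (R : Fin N → Matrix (Fin k) (Fin k) ℝ)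
    (K : Fin N → Matrix (Fin k) (Fin d) ℝ) : Fin N → Matrix (Fin d) (Fin d) ℝ :=
  if h : ∃ P, IsLyap Pr A B Q R K P then h.choose else 0

/-- The LQR cost `C(K) = ∑ i, π i * tr(P^K_i Sg)`. -/
def cost {d k N : ℕ} (Pr : Matrix (Fin N) (Fin N) ℝ)
    (A : Fin N → Matrix (Fin d) (Fin d) ℝ) (B : Fin N → Matrix (Fin d) (Fin k) ℝ)
    (Q : Fin N → Matrix (Fin d) (Fin d) ℝ) (R : Fin N → Matrix (Fin k) (Fin k) ℝ)
    (piv : Fin N → ℝ) (Sg : Matrix (Fin d) (Fin d) ℝ)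
    (K : Fin N → Matrix (Fin k) (Fin d) ℝ) : ℝ :=
  ∑ i, piv i * (PK Pr A B Q R K i * Sg).trace

/-- The operator `T_j(V) = ∑ i, p i j • (Γ i * V i * Γ iᵀ)`. -/
def opT {d N : ℕ} (Pr : Matrix (Fin N) (Fin N) ℝ)
    (Γ : Fin N → Matrix (Fin d) (Fin d) ℝ)
    (V : Fin N → Matrix (Fin d) (Fin d) ℝ) : Fin N → Matrix (Fin d) (Fin d) ℝ :=
  fun j => ∑ i, Pr i j • (Γ i * V i * (Γ i)ᵀ)

/-- `𝐗^K = ∑_{t=0}^∞ T^t(X(0))` with `X_i(0) = π i • Sg`. -/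
def XK {d N : ℕ} (Pr : Matrix (Fin N) (Fin N) ℝ) (piv : Fin N → ℝ)
    (Sg : Matrix (Fin d) (Fin d) ℝ) (Γ : Fin N → Matrix (Fin d) (Fin d) ℝ) :
    Fin N → Matrix (Fin d) (Fin d) ℝ :=
  ∑' t : ℕ, (opT Pr Γ)^[t] (fun i => piv i • Sg)

/-- `L^K_i = (R i + B iᵀ E_i(P^K) B i) K i - B iᵀ E_i(P^K) A i`. -/
def LK {d k N : ℕ} (Pr : Matrix (Fin N) (Fin N) ℝ)
    (A : Fin N → Matrix (Fin d) (Fin d) ℝ) (B : Fin N → Matrix (Fin d) (Fin k) ℝ)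
    (Q : Fin N → Matrix (Fin d) (Fin d) ℝ) (R : Fin N → Matrix (Fin k) (Fin k) ℝ)
    (K : Fin N → Matrix (Fin k) (Fin d) ℝ) : Fin N → Matrix (Fin k) (Fin d) ℝ :=
  fun i => (R i + (B i)ᵀ * opE Pr (PK Pr A B Q R K) i * B i) * K i
    - (B i)ᵀ * opE Pr (PK Pr A B Q R K) i * A i

/-- The operator `L_i(V) = Γ iᵀ E_i(V) Γ i`. -/
def opL {d N : ℕ} (Pr : Matrix (Fin N) (Fin N) ℝ)
    (Γ : Fin N → Matrix (Fin d) (Fin d) ℝ)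
    (V : Fin N → Matrix (Fin d) (Fin d) ℝ) : Fin N → Matrix (Fin d) (Fin d) ℝ :=
  fun i => (Γ i)ᵀ * opE Pr V i * Γ i

/-- `(P^K)'[E] = ∑_{t=0}^∞ L^t(Eᵀ L^K + (L^K)ᵀ E)`. -/
def PKd {d k N : ℕ} (Pr : Matrix (Fin N) (Fin N) ℝ)
    (Γ : Fin N → Matrix (Fin d) (Fin d) ℝ)
    (Lk E : Fin N → Matrix (Fin k) (Fin d) ℝ) : Fin N → Matrix (Fin d) (Fin d) ℝ :=
  ∑' t : ℕ, (opL Pr Γ)^[t] (fun i => (E i)ᵀ * Lk i + (Lk i)ᵀ * E i)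

/-- `‖V‖₂² = ∑ i, tr(V iᵀ V i)`. -/
def norm2sq {a b N : ℕ} (V : Fin N → Matrix (Fin a) (Fin b) ℝ) : ℝ :=
  ∑ i, ((V i)ᵀ * V i).trace

/-- The inner product `⟨V, S⟩ = ∑ i, tr(V iᵀ S i)`. -/
def ip {a b N : ℕ} (V S : Fin N → Matrix (Fin a) (Fin b) ℝ) : ℝ :=
  ∑ i, ((V i)ᵀ * S i).trace

/-- The spectral norm (maximal singular value) of a matrix. -/
def specNorm {a b : ℕ} (M : Matrix (Fin a) (Fin b) ℝ) : ℝ :=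
  ⨆ x : {x : EuclideanSpace ℝ (Fin b) // ‖x‖ ≤ 1}, ‖Matrix.toEuclideanLin M x.1‖

/-- The minimal singular value of a square matrix. -/
def sigmaMin {a : ℕ} (M : Matrix (Fin a) (Fin a) ℝ) : ℝ :=
  ⨅ x : {x : EuclideanSpace ℝ (Fin a) // ‖x‖ = 1}, ‖Matrix.toEuclideanLin M x.1‖

/-- `‖V‖_max = max_i ‖V i‖` (spectral norms). -/
def maxNorm {a b N : ℕ} (V : Fin N → Matrix (Fin a) (Fin b) ℝ) : ℝ :=
  ⨆ i, specNorm (V i)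

/-- `Λ_min(V) = min_i σ_min(V i)`. -/
def lamMin {a N : ℕ} (V : Fin N → Matrix (Fin a) (Fin a) ℝ) : ℝ :=
  ⨅ i, sigmaMin (V i)

/-- `μ = (min_i π i) · σ_min(Sg)`. -/
def mu {d N : ℕ} (piv : Fin N → ℝ) (Sg : Matrix (Fin d) (Fin d) ℝ) : ℝ :=
  (⨅ i, piv i) * sigmaMin Sg

/-- `ξ(α) = (1/Λ_min(Q))·((1 + ‖B‖²_max)·α/μ + ‖R‖_max) − 1`. -/
def xi {d k N : ℕ} (B : Fin N → Matrix (Fin d) (Fin k) ℝ)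
    (R : Fin N → Matrix (Fin k) (Fin k) ℝ) (Q : Fin N → Matrix (Fin d) (Fin d) ℝ)
    (piv : Fin N → ℝ) (Sg : Matrix (Fin d) (Fin d) ℝ) (α : ℝ) : ℝ :=
  (1 / lamMin Q) * ((1 + maxNorm B ^ 2) * α / mu piv Sg + maxNorm R) - 1

/-- The smoothness constant
`L(α) = 2·(‖R‖_max + ‖B‖²_max·(1 + 2ξ(α)/‖B‖_max)·α/μ)·α/Λ_min(Q)`. -/
def Lsm {d k N : ℕ} (B : Fin N → Matrix (Fin d) (Fin k) ℝ)
    (R : Fin N → Matrix (Fin k) (Fin k) ℝ) (Q : Fin N → Matrix (Fin d) (Fin d) ℝ)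
    (piv : Fin N → ℝ) (Sg : Matrix (Fin d) (Fin d) ℝ) (α : ℝ) : ℝ :=
  2 * (maxNorm R + maxNorm B ^ 2 * (1 + 2 * xi B R Q piv Sg α / maxNorm B)
      * α / mu piv Sg) * α / lamMin Q

end


end MJLS

/-
Write `P = P^K` and `cᵢ = Qᵢ + Kᵢᵀ Rᵢ Kᵢ`. The coupled Lyapunov equations read `P = c + 𝓛 P`,
where `𝓛 V = (Γᵢᵀ Eᵢ(V) Γᵢ)ᵢ` preserves positive semidefinite tuples and is represented by `𝒜` on
flattened tuples. Mean-square stability and Gelfand's formula give `𝒜ⁿ → 0`, so the equations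
have a solution, and every solution is the limit of the positive semidefinite partial sums
`∑_{t<n} 𝓛ᵗ c` (so the choice made in `PK` is harmless). Hence `P^K_i ⪰ Kᵢᵀ Rᵢ Kᵢ`, and
`tr(P^K_i Σ₀) ≥ σ_min(Σ₀) tr(Kᵢᵀ Rᵢ Kᵢ) ≥ σ_min(Σ₀) Λ_min(R) tr(Kᵢᵀ Kᵢ)`; weighting by
`πᵢ ≥ min π` gives the bound, and `μ Λ_min(R) > 0` turns it into the divergence of the cost.
-/

theorem tendsto_sum_range_iterate_of_eq_add {E : Type*} [AddCommGroup E] [TopologicalSpace E]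
    [IsTopologicalAddGroup E] (L : E →+ E) {c p : E} (hp : p = c + L p)
    (hL : Tendsto (fun n => L^[n] p) atTop (𝓝 0)) :
    Tendsto (fun n => ∑ t ∈ Finset.range n, L^[t] c) atTop (𝓝 p) := by
  have hsum : ∀ n, ∑ t ∈ Finset.range n, L^[t] c = p - L^[n] p := by
    intro n
    induction n with
    | zero => simp
    | succ n ih =>
      have hLp : L p = p - c := eq_sub_of_add_eq' hp.symm
      rw [Finset.sum_range_succ, ih, Function.iterate_succ_apply, hLp, iterate_map_sub]
      abel
  simpa [hsum] using tendsto_const_nhds.sub hL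

theorem LinearMap.exists_eq_add_apply_of_tendsto_iterate {K E : Type*} [Field K]
    [AddCommGroup E] [Module K E] [FiniteDimensional K E] [TopologicalSpace E] [T2Space E]
    (L : E →ₗ[K] E) (hL : ∀ v, Tendsto (fun n => L^[n] v) atTop (𝓝 0)) (c : E) :
    ∃ p, p = c + L p := by
  have hinj : Function.Injective (LinearMap.id - L : E →ₗ[K] E) := by
    refine (injective_iff_map_eq_zero _).2 fun v hv => ?_
    have hfix : L v = v := (sub_eq_zero.1 hv).symm
    refine tendsto_nhds_unique ?_ (hL v)
    simp only [Function.iterate_fixed hfix, tendsto_const_nhds]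
  obtain ⟨p, hp⟩ := LinearMap.injective_iff_surjective.1 hinj c
  exact ⟨p, by rw [← hp]; simp⟩

theorem tendsto_pow_nhds_zero_of_spectralRadius_lt_one {A : Type*} [NormedRing A]
    [NormedAlgebra ℂ A] [CompleteSpace A] {a : A} (h : spectralRadius ℂ a < 1) :
    Tendsto (a ^ ·) atTop (𝓝 0) := by
  obtain ⟨r, hρr, hr1⟩ := ENNReal.lt_iff_exists_nnreal_btwn.1 h
  have hbound : ∀ᶠ n : ℕ in atTop, ‖a ^ n‖ ≤ (r : ℝ) ^ n := by
    filter_upwards [(spectrum.pow_norm_pow_one_div_tendsto_nhds_spectralRadius a).eventually_lt_const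
      hρr, eventually_ge_atTop 1] with n hn hn1
    rw [ENNReal.ofReal_lt_iff_lt_toReal (by positivity) ENNReal.coe_ne_top, ENNReal.coe_toReal,
      one_div] at hn
    exact_mod_cast ((Real.rpow_inv_lt_iff_of_pos (norm_nonneg _) r.2 (Nat.cast_pos.2 hn1)).1 hn).le
  exact squeeze_zero_norm' hbound (tendsto_pow_atTop_nhds_zero_of_lt_one r.2 (mod_cast hr1))

namespace Matrix

attribute [local instance] Matrix.linftyOpNormedRing Matrix.linftyOpNormedAlgebra in
theorem tendsto_pow_nhds_zero_of_spectralRadius_map_lt_one {ι : Type*} [Fintype ι]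
    [DecidableEq ι] {M : Matrix ι ι ℝ} (h : spectralRadius ℂ (M.map (algebraMap ℝ ℂ)) < 1) :
    Tendsto (M ^ ·) atTop (𝓝 0) := by
  have : CompleteSpace (Matrix ι ι ℂ) := FiniteDimensional.complete ℂ _
  have hre : Continuous (map · Complex.re : Matrix ι ι ℂ → Matrix ι ι ℝ) :=
    continuous_id.matrix_map Complex.continuous_re
  convert (hre.tendsto 0).comp (tendsto_pow_nhds_zero_of_spectralRadius_lt_one h) using 1
  · ext n i j
    simp only [Function.comp_apply, ← Matrix.map_pow, map_apply]
    rfl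
  · ext; simp

variable {n : Type*} [Fintype n]

theorem isClosed_setOf_posSemidef : IsClosed {M : Matrix n n ℝ | M.PosSemidef} := by
  simp only [posSemidef_iff_dotProduct_mulVec, Set.ofPred_and, Set.ofPred_forall]
  exact (isClosed_eq continuous_id.matrix_conjTranspose continuous_id).inter <|
    isClosed_iInter fun x => isClosed_le continuous_const <|
      continuous_const.dotProduct (continuous_id.matrix_mulVec continuous_const)

open scoped MatrixOrder in
theorem IsHermitian.posSemidef_sub_smul_one_iff [DecidableEq n] {M : Matrix n n ℝ}
    (hM : M.IsHermitian) {s : ℝ} : (M - s • 1).PosSemidef ↔ ∀ i, s ≤ hM.eigenvalues i := by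
  rw [← le_iff, ← Algebra.algebraMap_eq_smul_one,
    algebraMap_le_iff_le_spectrum hM.isSelfAdjoint, hM.spectrum_real_eq_range_eigenvalues,
    Set.forall_mem_range]

theorem PosSemidef.transpose_mul_mul_same {m : Type*} [Fintype m] {R : Matrix n n ℝ}
    (hR : R.PosSemidef) (K : Matrix n m ℝ) : (Kᵀ * R * K).PosSemidef := by
  simpa only [conjTranspose_eq_transpose_of_trivial] using hR.conjTranspose_mul_mul_same K

theorem trace_transpose_mul_self_nonneg {m : Type*} [Fintype m] (V : Matrix m n ℝ) :
    0 ≤ (Vᵀ * V).trace := by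
  simpa only [conjTranspose_eq_transpose_of_trivial] using
    (posSemidef_conjTranspose_mul_self V).trace_nonneg

open scoped MatrixOrder in
theorem PosSemidef.trace_mul_nonneg {A B : Matrix n n ℝ} (hA : A.PosSemidef)
    (hB : B.PosSemidef) : 0 ≤ (A * B).trace := by
  classical
  obtain ⟨C, rfl⟩ := CStarAlgebra.nonneg_iff_eq_star_mul_self.mp hA.nonneg
  rw [star_eq_conjTranspose, ← trace_mul_cycle]
  exact (hB.mul_mul_conjTranspose_same C).trace_nonneg

theorem PosSemidef.mul_trace_le_trace_mul [DecidableEq n] {X S : Matrix n n ℝ} {s : ℝ}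
    (hX : X.PosSemidef) (hS : (S - s • 1).PosSemidef) : s * X.trace ≤ (X * S).trace := by
  have := hX.trace_mul_nonneg hS
  rw [Matrix.mul_sub, Matrix.mul_smul, Matrix.mul_one, trace_sub, trace_smul, smul_eq_mul] at this
  linarith

theorem trace_mul_le_trace_mul_of_posSemidef_sub {X Y S : Matrix n n ℝ}
    (hXY : (Y - X).PosSemidef) (hS : S.PosSemidef) : (X * S).trace ≤ (Y * S).trace := by
  have := hXY.trace_mul_nonneg hS
  rw [Matrix.sub_mul, trace_sub] at this
  linarith

theorem mul_trace_transpose_mul_le [DecidableEq n] {m : Type*} [Fintype m] {R : Matrix n n ℝ}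
    {s : ℝ} (hR : (R - s • 1).PosSemidef) (K : Matrix n m ℝ) :
    s * (Kᵀ * K).trace ≤ (Kᵀ * R * K).trace := by
  have := (hR.conjTranspose_mul_mul_same K).trace_nonneg
  rw [conjTranspose_eq_transpose_of_trivial, Matrix.mul_sub, Matrix.sub_mul, trace_sub,
    Matrix.mul_smul, Matrix.smul_mul, Matrix.mul_one, trace_smul, smul_eq_mul] at this
  linarith

end Matrix

namespace MJLS

section SigmaMin

variable {a : ℕ} {M : Matrix (Fin a) (Fin a) ℝ}

theorem sigmaMin_nonneg (M : Matrix (Fin a) (Fin a) ℝ) : 0 ≤ sigmaMin M :=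
  Real.iInf_nonneg fun _ => norm_nonneg _

theorem sigmaMin_le_eigenvalues (hM : M.PosSemidef) (i : Fin a) :
    sigmaMin M ≤ hM.1.eigenvalues i := by
  set v := hM.1.eigenvectorBasis i
  have hv : ‖v‖ = 1 := hM.1.eigenvectorBasis.orthonormal.1 i
  have hMv : toEuclideanLin M v = hM.1.eigenvalues i • v := by
    rw [toLpLin_apply, hM.1.mulVec_eigenvectorBasis]
    rfl
  calc sigmaMin M ≤ ‖toEuclideanLin M v‖ :=
        ciInf_le ⟨0, by rintro _ ⟨x, rfl⟩; exact norm_nonneg _⟩ (⟨v, hv⟩ : {x // ‖x‖ = 1})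
    _ = hM.1.eigenvalues i := by
        rw [hMv, norm_smul, hv, mul_one, Real.norm_of_nonneg (hM.eigenvalues_nonneg i)]

theorem posSemidef_sub_sigmaMin_smul_one (hM : M.PosSemidef) :
    (M - sigmaMin M • 1).PosSemidef :=
  hM.isHermitian.posSemidef_sub_smul_one_iff.2 (sigmaMin_le_eigenvalues hM)

theorem sigmaMin_pos (hM : M.PosDef) (ha : 0 < a) : 0 < sigmaMin M := by
  have : Nonempty (Fin a) := ⟨⟨0, ha⟩⟩
  obtain ⟨i₀, hi₀⟩ := Finite.exists_min hM.1.eigenvalues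
  have hsub := hM.isHermitian.posSemidef_sub_smul_one_iff.2 hi₀
  have : Nonempty {x : EuclideanSpace ℝ (Fin a) // ‖x‖ = 1} :=
    ⟨⟨EuclideanSpace.single ⟨0, ha⟩ 1, by simp⟩⟩
  refine (hM.eigenvalues_pos i₀).trans_le (le_ciInf fun x => ?_)
  have hq := (isPositive_toEuclideanLin_iff.2 hsub).inner_nonneg_left x.1
  simp only [map_sub, map_smul, toLpLin_one, LinearMap.sub_apply, LinearMap.smul_apply,
    LinearMap.id_coe, id_eq, inner_sub_left, inner_smul_left, Real.ringHom_apply,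
    inner_self_eq_norm_sq_to_K, x.2, one_pow, mul_one, sub_nonneg] at hq
  calc hM.1.eigenvalues i₀ ≤ inner ℝ (toEuclideanLin M x.1) x.1 := hq
    _ ≤ ‖toEuclideanLin M x.1‖ * ‖x.1‖ := real_inner_le_norm _ _
    _ = ‖toEuclideanLin M x.1‖ := by rw [x.2, mul_one]

end SigmaMin

variable {d k N : ℕ}

theorem norm2sq_nonneg {a b : ℕ} (V : Fin N → Matrix (Fin a) (Fin b) ℝ) : 0 ≤ norm2sq V :=
  Finset.sum_nonneg fun i _ => (V i).trace_transpose_mul_self_nonneg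

theorem lamMin_le {a : ℕ} (V : Fin N → Matrix (Fin a) (Fin a) ℝ) (i : Fin N) :
    lamMin V ≤ sigmaMin (V i) :=
  ciInf_le (Set.finite_range _).bddBelow i

theorem lamMin_pos {a : ℕ} {V : Fin N → Matrix (Fin a) (Fin a) ℝ} (hV : ∀ i, (V i).PosDef)
    (ha : 0 < a) (hN : 0 < N) : 0 < lamMin V := by
  have : Nonempty (Fin N) := ⟨⟨0, hN⟩⟩
  obtain ⟨i, hi⟩ := exists_eq_ciInf_of_finite (f := fun i => sigmaMin (V i))
  rw [lamMin, ← hi]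
  exact sigmaMin_pos (hV i) ha

theorem mu_pos {piv : Fin N → ℝ} {Sg : Matrix (Fin d) (Fin d) ℝ} (hpiv : ∀ i, 0 < piv i)
    (hSg : Sg.PosDef) (hd : 0 < d) (hN : 0 < N) : 0 < mu piv Sg := by
  have : Nonempty (Fin N) := ⟨⟨0, hN⟩⟩
  obtain ⟨i, hi⟩ := exists_eq_ciInf_of_finite (f := piv)
  rw [mu, ← hi]
  exact mul_pos (hpiv i) (sigmaMin_pos hSg hd)

section Lyapunov

variable {Pr : Matrix (Fin N) (Fin N) ℝ} {Γ : Fin N → Matrix (Fin d) (Fin d) ℝ}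

/-- Tuples of `d × d` matrices as vectors indexed by `Fin N × Fin d × Fin d`, the indexing on
which `calA` acts. -/
def flat (V : Fin N → Matrix (Fin d) (Fin d) ℝ) : Fin N × Fin d × Fin d → ℝ :=
  fun p => V p.1 p.2.1 p.2.2

theorem calA_apply (i j : Fin N) (a b c e : Fin d) :
    calA Pr Γ (i, a, b) (j, c, e) = Γ i c a * Γ i e b * Pr i j := by
  simp only [calA, Matrix.mul_apply, Matrix.reindex_apply, Matrix.submatrix_apply,
    Equiv.prodComm_symm, Equiv.prodComm_apply, Prod.swap_prod_mk,
    Matrix.blockDiagonal_apply, Matrix.kroneckerMap_apply, Matrix.one_apply,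
    Matrix.transpose_apply, Prod.fst_swap, Prod.snd_swap, ite_mul, zero_mul, mul_ite, mul_one,
    mul_zero, Fintype.sum_prod_type, Finset.sum_ite_eq, Finset.sum_ite_eq', Finset.mem_univ,
    if_true]

theorem flat_opL (V : Fin N → Matrix (Fin d) (Fin d) ℝ) :
    flat (opL Pr Γ V) = calA Pr Γ *ᵥ flat V := by
  funext ⟨i, a, b⟩
  simp only [flat, Matrix.mulVec, dotProduct, Fintype.sum_prod_type, calA_apply, opL, opE,
    Matrix.mul_apply, Matrix.transpose_apply, Matrix.sum_apply, Matrix.smul_apply, smul_eq_mul,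
    Finset.mul_sum, Finset.sum_mul]
  rw [Finset.sum_comm]
  refine Finset.sum_congr rfl fun j _ => ?_
  rw [Finset.sum_comm]
  exact Finset.sum_congr rfl fun c _ => Finset.sum_congr rfl fun e _ => by ring

theorem flat_iterate_opL (V : Fin N → Matrix (Fin d) (Fin d) ℝ) (n : ℕ) :
    flat ((opL Pr Γ)^[n] V) = calA Pr Γ ^ n *ᵥ flat V := by
  induction n with
  | zero => simp
  | succ n ih =>
    rw [Function.iterate_succ_apply', flat_opL, ih, Matrix.mulVec_mulVec, ← pow_succ']

theorem tendsto_iterate_opL_nhds_zero (h : Tendsto (calA Pr Γ ^ ·) atTop (𝓝 0))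
    (V : Fin N → Matrix (Fin d) (Fin d) ℝ) :
    Tendsto (fun n => (opL Pr Γ)^[n] V) atTop (𝓝 0) := by
  have hflat : Tendsto (fun n => flat ((opL Pr Γ)^[n] V)) atTop (𝓝 0) := by
    simp_rw [flat_iterate_opL]
    simpa [Function.comp_def] using
      ((continuous_id.matrix_mulVec continuous_const).tendsto 0).comp h
  exact tendsto_pi_nhds.2 fun i => tendsto_pi_nhds.2 fun a => tendsto_pi_nhds.2 fun b =>
    tendsto_pi_nhds.1 hflat (i, a, b)

def opLₗ (Pr : Matrix (Fin N) (Fin N) ℝ) (Γ : Fin N → Matrix (Fin d) (Fin d) ℝ) :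
    (Fin N → Matrix (Fin d) (Fin d) ℝ) →ₗ[ℝ] Fin N → Matrix (Fin d) (Fin d) ℝ where
  toFun := opL Pr Γ
  map_add' U V := by
    funext i
    simp only [opL, opE, Pi.add_apply, smul_add, Finset.sum_add_distrib, Matrix.mul_add,
      Matrix.add_mul]
  map_smul' c V := by
    funext i
    simp only [opL, opE, Pi.smul_apply, smul_comm (Pr i _) c, ← Finset.smul_sum,
      Matrix.mul_smul, Matrix.smul_mul, RingHom.id_apply]

theorem opE_posSemidef (hPr : ∀ i j, 0 ≤ Pr i j) {V : Fin N → Matrix (Fin d) (Fin d) ℝ}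
    (hV : ∀ j, (V j).PosSemidef) (i : Fin N) : (opE Pr V i).PosSemidef :=
  Matrix.posSemidef_sum _ fun j _ => (hV j).smul (hPr i j)

theorem opL_posSemidef (hPr : ∀ i j, 0 ≤ Pr i j) {V : Fin N → Matrix (Fin d) (Fin d) ℝ}
    (hV : ∀ j, (V j).PosSemidef) (i : Fin N) : (opL Pr Γ V i).PosSemidef :=
  (opE_posSemidef hPr hV i).transpose_mul_mul_same (Γ i)

theorem iterate_opL_posSemidef (hPr : ∀ i j, 0 ≤ Pr i j) {V : Fin N → Matrix (Fin d) (Fin d) ℝ}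
    (hV : ∀ j, (V j).PosSemidef) (n : ℕ) (i : Fin N) : ((opL Pr Γ)^[n] V i).PosSemidef := by
  induction n generalizing V with
  | zero => exact hV i
  | succ n ih => exact ih (opL_posSemidef hPr hV)

/-- A solution of `P = c + 𝓛 P` is the limit of the partial sums `∑_{t<n} 𝓛ᵗ c`. -/
theorem posSemidef_of_eq_add_opL (hPr : ∀ i j, 0 ≤ Pr i j)
    {c P : Fin N → Matrix (Fin d) (Fin d) ℝ} (hc : ∀ i, (c i).PosSemidef)
    (hP : P = c + opL Pr Γ P) (hL : Tendsto (fun n => (opL Pr Γ)^[n] P) atTop (𝓝 0))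
    (i : Fin N) : (P i).PosSemidef := by
  have hclosed : IsClosed {V : Fin N → Matrix (Fin d) (Fin d) ℝ | ∀ i, (V i).PosSemidef} := by
    simp only [Set.ofPred_forall]
    exact isClosed_iInter fun i => Matrix.isClosed_setOf_posSemidef.preimage
      (continuous_apply i : Continuous fun V : Fin N → Matrix (Fin d) (Fin d) ℝ => V i)
  refine hclosed.mem_of_tendsto
    (tendsto_sum_range_iterate_of_eq_add (opLₗ Pr Γ).toAddMonoidHom hP hL)
    (Eventually.of_forall fun n j => ?_) i
  rw [Finset.sum_apply]
  exact Matrix.posSemidef_sum _ fun t _ => iterate_opL_posSemidef hPr hc t j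

variable {A : Fin N → Matrix (Fin d) (Fin d) ℝ} {B : Fin N → Matrix (Fin d) (Fin k) ℝ}
  {Q : Fin N → Matrix (Fin d) (Fin d) ℝ} {R : Fin N → Matrix (Fin k) (Fin k) ℝ}
  {K : Fin N → Matrix (Fin k) (Fin d) ℝ}

theorem isLyap_iff_eq_add_opL {P : Fin N → Matrix (Fin d) (Fin d) ℝ} :
    IsLyap Pr A B Q R K P ↔ P = (fun i => Q i + (K i)ᵀ * R i * K i) + opL Pr (Gam A B K) P :=
  ⟨fun h => funext h, fun h i => congrFun h i⟩

theorem tendsto_iterate_opL_Gam_nhds_zero (hK : MSS Pr A B K)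
    (V : Fin N → Matrix (Fin d) (Fin d) ℝ) :
    Tendsto (fun n => (opL Pr (Gam A B K))^[n] V) atTop (𝓝 0) :=
  tendsto_iterate_opL_nhds_zero (Matrix.tendsto_pow_nhds_zero_of_spectralRadius_map_lt_one hK) V

theorem isLyap_PK (hK : MSS Pr A B K) : IsLyap Pr A B Q R K (PK Pr A B Q R K) := by
  have hex : ∃ P, IsLyap Pr A B Q R K P :=
    ((opLₗ Pr (Gam A B K)).exists_eq_add_apply_of_tendsto_iterate
      (tendsto_iterate_opL_Gam_nhds_zero hK) _).imp fun _ => isLyap_iff_eq_add_opL.2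
  rw [PK, dif_pos hex]
  exact hex.choose_spec

theorem posSemidef_PK (hPr : ∀ i j, 0 ≤ Pr i j) (hQ : ∀ i, (Q i).PosSemidef)
    (hR : ∀ i, (R i).PosSemidef) (hK : MSS Pr A B K) (i : Fin N) :
    (PK Pr A B Q R K i).PosSemidef :=
  posSemidef_of_eq_add_opL hPr (fun j => (hQ j).add ((hR j).transpose_mul_mul_same (K j)))
    (isLyap_iff_eq_add_opL.1 (isLyap_PK hK)) (tendsto_iterate_opL_Gam_nhds_zero hK _) i

theorem posSemidef_PK_sub (hPr : ∀ i j, 0 ≤ Pr i j) (hQ : ∀ i, (Q i).PosSemidef)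
    (hR : ∀ i, (R i).PosSemidef) (hK : MSS Pr A B K) (i : Fin N) :
    (PK Pr A B Q R K i - (K i)ᵀ * R i * K i).PosSemidef := by
  have hP : PK Pr A B Q R K i - (K i)ᵀ * R i * K i
      = Q i + opL Pr (Gam A B K) (PK Pr A B Q R K) i := by
    rw [isLyap_PK hK i, opL]
    abel
  rw [hP]
  exact (hQ i).add (opL_posSemidef hPr (posSemidef_PK hPr hQ hR hK) i)

theorem sigmaMin_mul_lamMin_mul_trace_le {Sg : Matrix (Fin d) (Fin d) ℝ}
    (hPr : ∀ i j, 0 ≤ Pr i j) (hSg : Sg.PosSemidef) (hQ : ∀ i, (Q i).PosSemidef)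
    (hR : ∀ i, (R i).PosSemidef) (hK : MSS Pr A B K) (i : Fin N) :
    sigmaMin Sg * (lamMin R * ((K i)ᵀ * K i).trace) ≤ (PK Pr A B Q R K i * Sg).trace := by
  have hRi : (R i - lamMin R • 1).PosSemidef :=
    (hR i).isHermitian.posSemidef_sub_smul_one_iff.2 fun j =>
      (lamMin_le R i).trans (sigmaMin_le_eigenvalues (hR i) j)
  calc sigmaMin Sg * (lamMin R * ((K i)ᵀ * K i).trace)
      ≤ sigmaMin Sg * ((K i)ᵀ * R i * K i).trace :=
        mul_le_mul_of_nonneg_left (Matrix.mul_trace_transpose_mul_le hRi (K i))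
          (sigmaMin_nonneg Sg)
    _ ≤ ((K i)ᵀ * R i * K i * Sg).trace :=
        ((hR i).transpose_mul_mul_same (K i)).mul_trace_le_trace_mul
          (posSemidef_sub_sigmaMin_smul_one hSg)
    _ ≤ (PK Pr A B Q R K i * Sg).trace :=
        Matrix.trace_mul_le_trace_mul_of_posSemidef_sub (posSemidef_PK_sub hPr hQ hR hK i) hSg

theorem mu_mul_lamMin_mul_norm2sq_le_cost {piv : Fin N → ℝ} {Sg : Matrix (Fin d) (Fin d) ℝ}
    (hPr : ∀ i j, 0 ≤ Pr i j) (hpiv : ∀ i, 0 ≤ piv i) (hSg : Sg.PosSemidef)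
    (hQ : ∀ i, (Q i).PosSemidef) (hR : ∀ i, (R i).PosSemidef) (hK : MSS Pr A B K) :
    mu piv Sg * lamMin R * norm2sq K ≤ cost Pr A B Q R piv Sg K := by
  rw [mu, norm2sq, cost, Finset.mul_sum]
  refine Finset.sum_le_sum fun i _ => ?_
  have hnonneg : 0 ≤ sigmaMin Sg * (lamMin R * ((K i)ᵀ * K i).trace) :=
    mul_nonneg (sigmaMin_nonneg Sg) (mul_nonneg (Real.iInf_nonneg fun j => sigmaMin_nonneg (R j))
      (K i).trace_transpose_mul_self_nonneg)
  calc (⨅ j, piv j) * sigmaMin Sg * lamMin R * ((K i)ᵀ * K i).trace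
      = (⨅ j, piv j) * (sigmaMin Sg * (lamMin R * ((K i)ᵀ * K i).trace)) := by ring
    _ ≤ piv i * (PK Pr A B Q R K i * Sg).trace :=
        mul_le_mul (ciInf_le (Set.finite_range _).bddBelow i)
          (sigmaMin_mul_lamMin_mul_trace_le hPr hSg hQ hR hK i) hnonneg (hpiv i)

end Lyapunov

theorem coercivity_growth_general
    (d k N : ℕ) (hd : 0 < d) (hk : 0 < k) (hN : 0 < N)
    (A : Fin N → Matrix (Fin d) (Fin d) ℝ) (B : Fin N → Matrix (Fin d) (Fin k) ℝ)
    (Pr : Matrix (Fin N) (Fin N) ℝ)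
    (hPr : ∀ i j, 0 ≤ Pr i j)
    (piv : Fin N → ℝ) (hpiv : ∀ i, 0 < piv i)
    (Sg : Matrix (Fin d) (Fin d) ℝ) (hSg : Sg.PosDef)
    (Q : Fin N → Matrix (Fin d) (Fin d) ℝ) (hQ : ∀ i, (Q i).PosDef)
    (R : Fin N → Matrix (Fin k) (Fin k) ℝ) (hR : ∀ i, (R i).PosDef) :
    (∀ K : Fin N → Matrix (Fin k) (Fin d) ℝ, MSS Pr A B K →
        mu piv Sg * lamMin R * norm2sq K ≤ cost Pr A B Q R piv Sg K) ∧
    ∀ Kl : ℕ → Fin N → Matrix (Fin k) (Fin d) ℝ,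
      (∀ l, MSS Pr A B (Kl l)) →
      Tendsto (fun l => Real.sqrt (norm2sq (Kl l))) atTop atTop →
      Tendsto (fun l => cost Pr A B Q R piv Sg (Kl l)) atTop atTop := by
  have bound : ∀ K, MSS Pr A B K → mu piv Sg * lamMin R * norm2sq K ≤ cost Pr A B Q R piv Sg K :=
    fun K => mu_mul_lamMin_mul_norm2sq_le_cost hPr (fun i => (hpiv i).le) hSg.posSemidef
      (fun i => (hQ i).posSemidef) (fun i => (hR i).posSemidef)
  refine ⟨bound, fun Kl hKl hnorm => ?_⟩
  have hc : 0 < mu piv Sg * lamMin R := mul_pos (mu_pos hpiv hSg hd hN) (lamMin_pos hR hk hN)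
  refine tendsto_atTop_mono (fun l => ?_) ((hnorm.atTop_mul_atTop₀ hnorm).const_mul_atTop hc)
  rw [Real.mul_self_sqrt (norm2sq_nonneg _)]
  exact bound _ (hKl l)

/-- coercivity (growth part): `C(K) ≥ μ Λ_min(R) ‖K‖₂²`, and
consequently `C(K^l) → ∞` along any stabilizing sequence with `‖K^l‖₂ → ∞`. -/
theorem coercivity_growth
    (d k N : ℕ) (hd : 0 < d) (hk : 0 < k) (hN : 0 < N)
    (A : Fin N → Matrix (Fin d) (Fin d) ℝ) (B : Fin N → Matrix (Fin d) (Fin k) ℝ)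
    (Pr : Matrix (Fin N) (Fin N) ℝ)
    (hPr : ∀ i j, 0 ≤ Pr i j) (hPrSum : ∀ i, ∑ j, Pr i j = 1)
    (piv : Fin N → ℝ) (hpiv : ∀ i, 0 < piv i) (hpivSum : ∑ i, piv i = 1)
    (Sg : Matrix (Fin d) (Fin d) ℝ) (hSg : Sg.PosDef)
    (Q : Fin N → Matrix (Fin d) (Fin d) ℝ) (hQ : ∀ i, (Q i).PosDef)
    (R : Fin N → Matrix (Fin k) (Fin k) ℝ) (hR : ∀ i, (R i).PosDef) :
    (∀ K : Fin N → Matrix (Fin k) (Fin d) ℝ, MSS Pr A B K →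
        mu piv Sg * lamMin R * norm2sq K ≤ cost Pr A B Q R piv Sg K) ∧
    ∀ Kl : ℕ → Fin N → Matrix (Fin k) (Fin d) ℝ,
      (∀ l, MSS Pr A B (Kl l)) →
      Tendsto (fun l => Real.sqrt (norm2sq (Kl l))) atTop atTop →
      Tendsto (fun l => cost Pr A B Q R piv Sg (Kl l)) atTop atTop :=
  coercivity_growth_general d k N hd hk hN A B Pr hPr piv hpiv Sg hSg Q hQ R hR

end MJLS
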